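/- Assume [E : F] = 2. Suppose x, y is an E-basis of M_1 such that every 2-step centraliser C_i (i ≥ 2) equals E·x or E·y, and both values occur. Let γ, δ ∈ E \ F with γ ≠ δ. Then the Lie F-subalgebra L of M generated by X = x + y and Y = γx + δy is thin and non-metabelian, and dim_F L_i = 2 for every i ≠ 2. -/

import Mathlib

open Submodule

/-- The `i`-th two-step centraliser `C_i = {a ∈ M_1 | ⁅a, u⁆ = 0 for all u ∈ M_i}`. -/
def twoStepCentraliser {E : Type*} [Field E] {M : Type*} [LieRing M] [LieAlgebra E M]
    (Mc : ℕ → Submodule E M) (i : ℕ) : Submodule E M where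
  carrier := {a : M | a ∈ Mc 1 ∧ ∀ u ∈ Mc i, ⁅a, u⁆ = 0}
  add_mem' := by
    rintro a b ⟨ha1, ha2⟩ ⟨hb1, hb2⟩
    exact ⟨add_mem ha1 hb1, fun u hu => by rw [add_lie, ha2 u hu, hb2 u hu, add_zero]⟩
  zero_mem' := ⟨zero_mem _, fun u _ => zero_lie u⟩
  smul_mem' := by
    rintro c a ⟨ha1, ha2⟩
    exact ⟨Submodule.smul_mem _ c ha1, fun u hu => by rw [smul_lie, ha2 u hu, smul_zero]⟩

/-- `Mc` is a grading of `M` as a graded Lie algebra of maximal class over `E`,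
generated in degree 1. -/
structure IsMaximalClass (E : Type*) [Field E] (M : Type*) [LieRing M] [LieAlgebra E M]
    (Mc : ℕ → Submodule E M) : Prop where
  zero_bot : Mc 0 = ⊥
  internal : DirectSum.IsInternal Mc
  lie_mem : ∀ i j : ℕ, ∀ x ∈ Mc i, ∀ y ∈ Mc j, ⁅x, y⁆ ∈ Mc (i + j)
  finrank_one : Module.finrank E ↥(Mc 1) = 2
  finrank_eq_one : ∀ i : ℕ, 2 ≤ i → Module.finrank E ↥(Mc i) = 1
  span_succ : ∀ i : ℕ, 1 ≤ i →
    Mc (i + 1) = Submodule.span E {z : M | ∃ v ∈ Mc i, ∃ a ∈ Mc 1, z = ⁅v, a⁆}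

/-- The homogeneous components of the Lie `F`-subalgebra generated by `X` and `Y` in
degree 1:  `L_1 = span_F {X, Y}` and `L_{i+1} = span_F {⁅v, a⁆ : v ∈ L_i, a ∈ L_1}`. -/
def Lcomp (F : Type*) [Field F] {M : Type*} [LieRing M] [Module F M]
    (X Y : M) : ℕ → Submodule F M
  | 0 => ⊥
  | 1 => Submodule.span F {X, Y}
  | (i + 2) => Submodule.span F
      {z : M | ∃ v ∈ Lcomp F X Y (i + 1), ∃ a ∈ Submodule.span F ({X, Y} : Set M), z = ⁅v, a⁆}

/-- `d_i = dim_F (C_i ∩ L_1)`. -/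
noncomputable def dSeq (E : Type*) [Field E] {M : Type*} [LieRing M] [LieAlgebra E M]
    (Mc : ℕ → Submodule E M) (F : Type*) [Field F] [Algebra F E] [LieAlgebra F M]
    [IsScalarTower F E M] (X Y : M) (i : ℕ) : ℕ :=
  Module.finrank F
    ↥(Submodule.restrictScalars F (twoStepCentraliser Mc i) ⊓ Lcomp F X Y 1)

/-- The covering property: `⁅u, L_1⁆ = L_{i+1}` for every `i ≥ 1` and nonzero `u ∈ L_i`. -/
def CoveringProperty (F : Type*) [Field F] {M : Type*} [LieRing M] [Module F M]
    (X Y : M) : Prop :=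
  ∀ i : ℕ, 1 ≤ i → ∀ u ∈ Lcomp F X Y i, u ≠ 0 →
    Submodule.span F {z : M | ∃ a ∈ Lcomp F X Y 1, z = ⁅u, a⁆} = Lcomp F X Y (i + 1)

/-!
If `C_i = E·x`, bracketing a nonzero `w ∈ M_i` with `X = x + y` and `Y = γx + δy` gives
`⁅w, y⁆` and `δ⁅w, y⁆`, which span `M_{i+1}` over `F` because `δ, 1` is an `F`-basis of `E`
(symmetrically with `γ` when `C_i = E·y`). Hence `L_2 = F⁅X, Y⁆` is a line, `L_i = M_i` is an
`F`-plane for `i ≥ 3`, and every nonzero element of `L_i` covers `L_{i+1}`.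
Since `C_2 ≤ C_3`, both values occurring forces `C_k ≠ C_{k+1}` for some `k ≥ 3`; for nonzero
`z ∈ M_k = L_k` the Jacobi identity then gives `⁅⁅x, y⁆, z⁆ ≠ 0`. As `⁅X, Y⁆ = (δ - γ)⁅x, y⁆`
and `z` is a sum of commutators of elements of `L`, `L` is not metabelian.
-/

lemma Function.exists_ne_succ_of_ne {α : Type*} {f : ℕ → α} {n i j : ℕ} (hi : n ≤ i)
    (hj : n ≤ j) (h : f i ≠ f j) : ∃ k, n ≤ k ∧ f k ≠ f (k + 1) := by
  by_contra! hconst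
  have hf : ∀ k, n ≤ k → f k = f n := fun k hk => by
    induction k, hk using Nat.le_induction with
    | base => rfl
    | succ k hk ih => rw [← hconst k hk, ih]
  exact h (by rw [hf i hi, hf j hj])

section LinearAlgebra

variable {K V : Type*} [Field K] [AddCommGroup V] [Module K V]

lemma span_pair_smul_eq_span_singleton {a b : K} {w : V} (hab : a ≠ 0 ∨ b ≠ 0) :
    span K {a • w, b • w} = span K {w} := by
  refine le_antisymm (span_le.2 ?_) ?_
  · rintro _ (rfl | rfl) <;> exact smul_mem _ _ (mem_span_singleton_self w)
  · rcases hab with h | h <;> rw [← span_singleton_smul_eq h.isUnit w] <;> exact span_mono (by simp)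

lemma Submodule.eq_span_singleton_of_finrank_eq_one {p : Submodule K V}
    (hp : Module.finrank K p = 1) {w : V} (hw : w ∈ p) (hw0 : w ≠ 0) : p = span K {w} := by
  have : FiniteDimensional K p := Module.finite_of_finrank_eq_succ hp
  refine (eq_of_le_of_finrank_eq ((span_singleton_le_iff_mem _ _).2 hw) ?_).symm
  rw [hp, finrank_span_singleton hw0]

lemma finrank_span_pair {a b : V} (h : LinearIndependent K ![a, b]) :
    Module.finrank K (span K {a, b}) = 2 := by
  rw [← Matrix.range_cons_cons_empty a b ![], finrank_span_eq_card h, Fintype.card_fin]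

lemma linearIndependent_add_smul_add_smul {x y : V} (hxy : LinearIndependent K ![x, y])
    {γ δ : K} (hγδ : γ ≠ δ) :
    LinearIndependent K ![x + y, γ • x + δ • y] := by
  rw [LinearIndependent.pair_iff] at hxy ⊢
  intro s t hst
  have h := hxy (s + t * γ) (s + t * δ) (by rw [← hst]; module)
  have ht : t = 0 := by
    have : t * (γ - δ) = 0 := by linear_combination h.1 - h.2
    simpa [sub_ne_zero.2 hγδ] using this
  subst ht
  simpa using h

end LinearAlgebra

section QuadraticExtension

variable {F E M : Type*} [Field F] [Field E] [Algebra F E] [AddCommGroup M] [Module E M]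
  [Module F M] [IsScalarTower F E M]

lemma finrank_restrictScalars_submodule (p : Submodule E M) :
    Module.finrank F (p.restrictScalars F) = Module.finrank F E * Module.finrank E p :=
  (Module.finrank_mul_finrank F E p).symm

lemma span_pair_smul_eq_restrictScalars_span_singleton (hEF : Module.finrank F E = 2) {δ : E}
    (hδ : δ ∉ Set.range (algebraMap F E)) (z : M) :
    span F {z, δ • z} = (span E {z}).restrictScalars F := by
  have hbasis : span F ({δ, 1} : Set E) = ⊤ := by
    have : FiniteDimensional F E := Module.finite_of_finrank_eq_succ hEF
    have hli : LinearIndependent F ![δ, 1] := by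
      rw [linearIndependent_fin2]
      refine ⟨by simp, fun a ha => hδ ⟨a, ?_⟩⟩
      simpa [Algebra.smul_def] using ha
    simpa [Set.pair_comm] using hli.span_eq_top_of_card_eq_finrank' (by simp [hEF])
  let f : E →ₗ[F] M := (LinearMap.toSpanSingleton E M z).restrictScalars F
  have : span F {z, δ • z} = (span F ({δ, 1} : Set E)).map f := by
    rw [map_span, Set.image_pair, Set.pair_comm]; simp [f]
  rw [this, hbasis, Submodule.map_top, LinearMap.span_singleton_eq_range]
  rfl

end QuadraticExtension

section LieBrackets

variable {R M : Type*} [CommRing R] [LieRing M] [LieAlgebra R M]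

lemma lie_smul_add_smul (a b c d : R) (X Y : M) :
    ⁅a • X + b • Y, c • X + d • Y⁆ = (a * d - b * c) • ⁅X, Y⁆ := by
  simp only [lie_add, add_lie, smul_lie, lie_smul, lie_self, ← lie_skew Y X]
  module

lemma span_lie_span_pair_self (X Y : M) :
    span R {z : M | ∃ v ∈ span R {X, Y}, ∃ a ∈ span R {X, Y}, z = ⁅v, a⁆} =
      span R {⁅X, Y⁆} := by
  refine le_antisymm (span_le.2 ?_) (span_mono ?_)
  · rintro _ ⟨v, hv, a, ha, rfl⟩
    obtain ⟨c, d, rfl⟩ := mem_span_pair.mp hv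
    obtain ⟨c', d', rfl⟩ := mem_span_pair.mp ha
    rw [SetLike.mem_coe, lie_smul_add_smul]
    exact smul_mem _ _ (mem_span_singleton_self _)
  · rintro _ rfl
    exact ⟨X, subset_span (by simp), Y, subset_span (by simp), rfl⟩

lemma span_lie_span_pair (u X Y : M) :
    span R {z : M | ∃ a ∈ span R {X, Y}, z = ⁅u, a⁆} = span R {⁅u, X⁆, ⁅u, Y⁆} := by
  have : {z : M | ∃ a ∈ span R {X, Y}, z = ⁅u, a⁆} =
      (span R {X, Y}).map (LieAlgebra.ad R M u) := by
    ext z; simp [eq_comm]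
  rw [this, span_eq, map_span, Set.image_pair, LieAlgebra.ad_apply, LieAlgebra.ad_apply]

lemma span_lie_span_singleton_span_pair (w X Y : M) :
    span R {z : M | ∃ v ∈ span R {w}, ∃ a ∈ span R {X, Y}, z = ⁅v, a⁆} =
      span R {⁅w, X⁆, ⁅w, Y⁆} := by
  let lie : M →ₗ[R] M →ₗ[R] M := LinearMap.mk₂ R (⁅·, ·⁆) add_lie smul_lie lie_add lie_smul
  have : span R {z : M | ∃ v ∈ span R {w}, ∃ a ∈ span R {X, Y}, z = ⁅v, a⁆} =
      map₂ lie (span R {w}) (span R {X, Y}) := by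
    rw [map₂_eq_span_image2]; congr 1; ext z; simp [lie, eq_comm]
  rw [this, map₂_span_span, Set.image2_singleton_left, Set.image_pair]
  rfl

end LieBrackets

lemma lie_eq_zero_of_mem_of_finrank_eq_one {K L : Type*} [Field K] [LieRing L] [LieAlgebra K L]
    {p : Submodule K L} (hp : Module.finrank K p = 1) {v w : L} (hv : v ∈ p) (hw : w ∈ p) :
    ⁅v, w⁆ = 0 := by
  rcases eq_or_ne v 0 with rfl | hv0
  · exact zero_lie w
  rw [p.eq_span_singleton_of_finrank_eq_one hp hv hv0, mem_span_singleton] at hw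
  obtain ⟨c, rfl⟩ := hw
  rw [lie_smul, lie_self, smul_zero]

section LowerComponents

variable {F M : Type*} [Field F] [LieRing M] [LieAlgebra F M] {X Y : M}

lemma Lcomp_one : Lcomp F X Y 1 = span F {X, Y} :=
  rfl

lemma Lcomp_succ {i : ℕ} (hi : 1 ≤ i) :
    Lcomp F X Y (i + 1) =
      span F {z : M | ∃ v ∈ Lcomp F X Y i, ∃ a ∈ Lcomp F X Y 1, z = ⁅v, a⁆} := by
  obtain ⟨j, rfl⟩ := Nat.exists_eq_add_of_le' hi
  rfl

lemma lie_mem_Lcomp_succ {i : ℕ} (hi : 1 ≤ i) {v a : M} (hv : v ∈ Lcomp F X Y i)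
    (ha : a ∈ Lcomp F X Y 1) : ⁅v, a⁆ ∈ Lcomp F X Y (i + 1) :=
  (Lcomp_succ (F := F) hi).ge (subset_span ⟨v, hv, a, ha, rfl⟩)

lemma span_lie_le_Lcomp_succ {i : ℕ} (hi : 1 ≤ i) {v : M} (hv : v ∈ Lcomp F X Y i) :
    span F {⁅v, X⁆, ⁅v, Y⁆} ≤ Lcomp F X Y (i + 1) := by
  rw [span_le, Set.insert_subset_iff, Set.singleton_subset_iff]
  exact ⟨lie_mem_Lcomp_succ hi hv (subset_span (by simp)),
    lie_mem_Lcomp_succ hi hv (subset_span (by simp))⟩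

lemma Lcomp_two : Lcomp F X Y 2 = span F {⁅X, Y⁆} :=
  span_lie_span_pair_self X Y

lemma span_lie_Lcomp_one_eq_Lcomp_two {u : M} (hu : u ∈ Lcomp F X Y 1) (hu0 : u ≠ 0) :
    span F {z : M | ∃ a ∈ Lcomp F X Y 1, z = ⁅u, a⁆} = Lcomp F X Y 2 := by
  obtain ⟨a, b, rfl⟩ := mem_span_pair.mp hu
  have hX : ⁅a • X + b • Y, X⁆ = (-b) • ⁅X, Y⁆ := by
    rw [add_lie, smul_lie, smul_lie, lie_self, ← lie_skew X Y]; module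
  have hY : ⁅a • X + b • Y, Y⁆ = a • ⁅X, Y⁆ := by
    simp [add_lie, smul_lie]
  have hab : -b ≠ 0 ∨ a ≠ 0 := by
    by_contra! h
    simp_all
  rw [Lcomp_two, Lcomp_one, span_lie_span_pair, hX, hY, span_pair_smul_eq_span_singleton hab]

lemma Lcomp_le_lieSpan (i : ℕ) :
    Lcomp F X Y i ≤ (LieSubalgebra.lieSpan F M {X, Y}).toSubmodule := by
  induction i using Nat.strong_induction_on with
  | _ i ih =>
    match i with
    | 0 => exact bot_le
    | 1 => exact span_le.2 LieSubalgebra.subset_lieSpan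
    | (j + 2) =>
      rw [Lcomp_succ (by omega), span_le]
      rintro _ ⟨v, hv, a, ha, rfl⟩
      exact LieSubalgebra.lie_mem _ (ih (j + 1) (by omega) hv) (ih 1 (by omega) ha)

lemma lie_lie_eq_zero_of_mem_Lcomp
    (hmet : ∀ a b c d : M,
        a ∈ LieSubalgebra.lieSpan F M {X, Y} → b ∈ LieSubalgebra.lieSpan F M {X, Y} →
        c ∈ LieSubalgebra.lieSpan F M {X, Y} → d ∈ LieSubalgebra.lieSpan F M {X, Y} →
        ⁅⁅a, b⁆, ⁅c, d⁆⁆ = 0)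
    {i : ℕ} (hi : 2 ≤ i) {z : M} (hz : z ∈ Lcomp F X Y i) : ⁅⁅X, Y⁆, z⁆ = 0 := by
  obtain ⟨j, rfl⟩ := Nat.exists_eq_add_of_le' hi
  suffices Lcomp F X Y (j + 2) ≤ LinearMap.ker (LieAlgebra.ad F M ⁅X, Y⁆) from this hz
  rw [Lcomp_succ (by omega), span_le]
  rintro _ ⟨v, hv, a, ha, rfl⟩
  exact hmet _ _ _ _ (LieSubalgebra.subset_lieSpan (by simp))
    (LieSubalgebra.subset_lieSpan (by simp)) (Lcomp_le_lieSpan _ hv) (Lcomp_le_lieSpan _ ha)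

end LowerComponents

section MaximalClass

variable {E M : Type*} [Field E] [LieRing M] [LieAlgebra E M] {Mc : ℕ → Submodule E M}

lemma lie_eq_zero_of_mem_twoStepCentraliser {i : ℕ} {a w : M}
    (ha : a ∈ twoStepCentraliser Mc i) (hw : w ∈ Mc i) : ⁅w, a⁆ = 0 := by
  rw [← lie_skew, ha.2 w hw, neg_zero]

namespace IsMaximalClass

lemma exists_mem_ne_zero (hM : IsMaximalClass E M Mc) {i : ℕ} (hi : 2 ≤ i) :
    ∃ w ∈ Mc i, w ≠ 0 := by
  refine Submodule.exists_mem_ne_zero_of_ne_bot fun h => ?_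
  have := hM.finrank_eq_one i hi
  rw [h, finrank_bot] at this
  exact zero_ne_one this

lemma eq_span_singleton (hM : IsMaximalClass E M Mc) {i : ℕ} (hi : 2 ≤ i) {w : M}
    (hw : w ∈ Mc i) (hw0 : w ≠ 0) : Mc i = span E {w} :=
  Submodule.eq_span_singleton_of_finrank_eq_one (hM.finrank_eq_one i hi) hw hw0

lemma two_eq_span_lie (hM : IsMaximalClass E M Mc) {p q : M}
    (hspan : span E {p, q} = Mc 1) : Mc 2 = span E {⁅p, q⁆} := by
  rw [hM.span_succ 1 le_rfl, ← hspan, span_lie_span_pair_self]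

lemma lie_ne_zero (hM : IsMaximalClass E M Mc) {p q : M} (hspan : span E {p, q} = Mc 1) :
    ⁅p, q⁆ ≠ 0 := by
  obtain ⟨w, hw, hw0⟩ := hM.exists_mem_ne_zero le_rfl
  rintro h
  rw [hM.two_eq_span_lie hspan, h, span_zero_singleton, mem_bot] at hw
  exact hw0 hw

lemma succ_eq_span_lie (hM : IsMaximalClass E M Mc) {p q : M} (hspan : span E {p, q} = Mc 1)
    {i : ℕ} (hi : 2 ≤ i) {w : M} (hw : w ∈ Mc i) (hw0 : w ≠ 0)
    (hCi : twoStepCentraliser Mc i = span E {p}) : Mc (i + 1) = span E {⁅w, q⁆} := by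
  have hwp : ⁅w, p⁆ = 0 :=
    lie_eq_zero_of_mem_twoStepCentraliser (hCi ▸ mem_span_singleton_self p) hw
  rw [hM.span_succ i (by omega), ← hspan, hM.eq_span_singleton hi hw hw0,
    span_lie_span_singleton_span_pair, hwp, span_insert_zero]

lemma twoStepCentraliser_two_le_three (hM : IsMaximalClass E M Mc) :
    twoStepCentraliser Mc 2 ≤ twoStepCentraliser Mc 3 := by
  rintro a ⟨ha1, ha2⟩
  refine ⟨ha1, fun u hu => ?_⟩
  suffices Mc 3 ≤ LinearMap.ker (LieAlgebra.ad E M a) from this hu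
  rw [hM.span_succ 2 (by omega), span_le]
  rintro _ ⟨v, hv, b, hb, rfl⟩
  have hvab : ⁅v, ⁅a, b⁆⁆ = 0 :=
    lie_eq_zero_of_mem_of_finrank_eq_one (hM.finrank_eq_one 2 le_rfl) hv (hM.lie_mem 1 1 a ha1 b hb)
  simp [leibniz_lie a v b, ha2 v hv, hvab]

lemma lie_lie_ne_zero (hM : IsMaximalClass E M Mc) {p q : M} (hp : p ∈ Mc 1)
    (hspan : span E {p, q} = Mc 1) {k : ℕ} (hk : 2 ≤ k) {z : M} (hz : z ∈ Mc k) (hz0 : z ≠ 0)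
    (hCk : twoStepCentraliser Mc k = span E {p}) (hp' : p ∉ twoStepCentraliser Mc (k + 1)) :
    ⁅⁅p, q⁆, z⁆ ≠ 0 := by
  have hpz : ⁅p, z⁆ = 0 :=
    (hCk ▸ mem_span_singleton_self p : p ∈ twoStepCentraliser Mc k).2 z hz
  rw [lie_lie, hpz, lie_zero, sub_zero]
  intro h
  refine hp' ⟨hp, fun u hu => ?_⟩
  rw [hM.succ_eq_span_lie hspan hk hz hz0 hCk, mem_span_singleton] at hu
  obtain ⟨c, rfl⟩ := hu
  rw [lie_smul, ← lie_skew z q, lie_neg, h, neg_zero, smul_zero]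

lemma Lcomp_le {F : Type*} [Field F] [Algebra F E] [LieAlgebra F M] [IsScalarTower F E M]
    (hM : IsMaximalClass E M Mc) {X Y : M} (hX : X ∈ Mc 1) (hY : Y ∈ Mc 1) {i : ℕ}
    (hi : 1 ≤ i) :
    Lcomp F X Y i ≤ (Mc i).restrictScalars F := by
  have h1 : Lcomp F X Y 1 ≤ (Mc 1).restrictScalars F := by
    rw [Lcomp_one, span_le, Set.insert_subset_iff, Set.singleton_subset_iff]
    exact ⟨hX, hY⟩
  induction i, hi using Nat.le_induction with
  | base => exact h1
  | succ i hi ih =>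
    rw [Lcomp_succ hi, span_le]
    rintro _ ⟨v, hv, a, ha, rfl⟩
    exact hM.lie_mem i 1 v (ih hv) a (h1 ha)

end IsMaximalClass
end MaximalClass

section AlternatingCentralisers

variable {E M : Type*} [Field E] [LieRing M] [LieAlgebra E M] {Mc : ℕ → Submodule E M}
  {F : Type*} [Field F] [Algebra F E] [LieAlgebra F M] [IsScalarTower F E M] {x y : M} {γ δ : E}

lemma lie_add_smul_add_smul : ⁅x + y, γ • x + δ • y⁆ = (δ - γ) • ⁅x, y⁆ := by
  simpa using lie_smul_add_smul (1 : E) 1 γ δ x y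

lemma twoStepCentraliser_eq_of_le (hxy : LinearIndependent E ![x, y])
    (hC : ∀ i : ℕ, 2 ≤ i →
      twoStepCentraliser Mc i = span E {x} ∨ twoStepCentraliser Mc i = span E {y})
    {i j : ℕ} (hi : 2 ≤ i) (hj : 2 ≤ j)
    (hle : twoStepCentraliser Mc i ≤ twoStepCentraliser Mc j) :
    twoStepCentraliser Mc i = twoStepCentraliser Mc j := by
  have hline : ∀ k, 2 ≤ k → Module.finrank E (twoStepCentraliser Mc k) = 1 := fun k hk => by
    rcases hC k hk with h | h <;> rw [h, finrank_span_singleton]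
    exacts [hxy.ne_zero 0, hxy.ne_zero 1]
  have := Module.finite_of_finrank_eq_succ (hline j hj)
  exact eq_of_le_of_finrank_eq hle (by rw [hline i hi, hline j hj])

lemma exists_twoStepCentraliser_ne_succ (hM : IsMaximalClass E M Mc)
    (hxy : LinearIndependent E ![x, y])
    (hC : ∀ i : ℕ, 2 ≤ i →
      twoStepCentraliser Mc i = span E {x} ∨ twoStepCentraliser Mc i = span E {y})
    (hCx : ∃ i : ℕ, 2 ≤ i ∧ twoStepCentraliser Mc i = span E {x})
    (hCy : ∃ j : ℕ, 2 ≤ j ∧ twoStepCentraliser Mc j = span E {y}) :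
    ∃ k, 3 ≤ k ∧ twoStepCentraliser Mc k ≠ twoStepCentraliser Mc (k + 1) := by
  obtain ⟨i, hi, hCi⟩ := hCx
  obtain ⟨j, hj, hCj⟩ := hCy
  have hspan_ne : span E {x} ≠ span E {y} := fun h => by
    obtain ⟨a, ha⟩ := mem_span_singleton.mp (h ▸ mem_span_singleton_self x)
    exact (linearIndependent_fin2.mp hxy).2 a ha
  obtain ⟨k, hk, hne⟩ :=
    Function.exists_ne_succ_of_ne (f := twoStepCentraliser Mc) hi hj (by rwa [hCi, hCj])
  rcases hk.eq_or_lt with rfl | hk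
  · exact absurd (twoStepCentraliser_eq_of_le hxy hC le_rfl (by omega)
      hM.twoStepCentraliser_two_le_three) hne
  · exact ⟨k, hk, hne⟩

lemma span_lie_eq_restrictScalars_succ (hM : IsMaximalClass E M Mc)
    (hEF : Module.finrank F E = 2) (hspan : span E {x, y} = Mc 1)
    (hγ : γ ∉ Set.range (algebraMap F E)) (hδ : δ ∉ Set.range (algebraMap F E))
    {i : ℕ} (hi : 2 ≤ i)
    (hCi : twoStepCentraliser Mc i = span E {x} ∨ twoStepCentraliser Mc i = span E {y})
    {w : M} (hw : w ∈ Mc i) (hw0 : w ≠ 0) :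
    span F {⁅w, x + y⁆, ⁅w, γ • x + δ • y⁆} = (Mc (i + 1)).restrictScalars F := by
  rcases hCi with h | h
  · have hwx : ⁅w, x⁆ = 0 :=
      lie_eq_zero_of_mem_twoStepCentraliser (h ▸ mem_span_singleton_self x) hw
    rw [lie_add, lie_add, lie_smul, lie_smul, hwx, smul_zero, zero_add, zero_add,
      span_pair_smul_eq_restrictScalars_span_singleton hEF hδ,
      hM.succ_eq_span_lie hspan hi hw hw0 h]
  · have hwy : ⁅w, y⁆ = 0 :=
      lie_eq_zero_of_mem_twoStepCentraliser (h ▸ mem_span_singleton_self y) hw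
    rw [Set.pair_comm] at hspan
    rw [lie_add, lie_add, lie_smul, lie_smul, hwy, smul_zero, add_zero, add_zero,
      span_pair_smul_eq_restrictScalars_span_singleton hEF hγ,
      hM.succ_eq_span_lie hspan hi hw hw0 h]

lemma Lcomp_succ_eq_restrictScalars (hM : IsMaximalClass E M Mc)
    (hEF : Module.finrank F E = 2) (hx : x ∈ Mc 1) (hy : y ∈ Mc 1)
    (hspan : span E {x, y} = Mc 1)
    (hC : ∀ i : ℕ, 2 ≤ i →
      twoStepCentraliser Mc i = span E {x} ∨ twoStepCentraliser Mc i = span E {y})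
    (hγ : γ ∉ Set.range (algebraMap F E)) (hδ : δ ∉ Set.range (algebraMap F E))
    {i : ℕ} (hi : 2 ≤ i) {w : M} (hw : w ∈ Lcomp F (x + y) (γ • x + δ • y) i) (hw0 : w ≠ 0) :
    Lcomp F (x + y) (γ • x + δ • y) (i + 1) = (Mc (i + 1)).restrictScalars F := by
  have hX : x + y ∈ Mc 1 := add_mem hx hy
  have hY : γ • x + δ • y ∈ Mc 1 := add_mem (smul_mem _ γ hx) (smul_mem _ δ hy)
  refine le_antisymm (hM.Lcomp_le hX hY (by omega)) ?_
  rw [← span_lie_eq_restrictScalars_succ hM hEF hspan hγ hδ hi (hC i hi)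
    (hM.Lcomp_le (F := F) hX hY (by omega) hw) hw0]
  exact span_lie_le_Lcomp_succ (by omega) hw

lemma Lcomp_eq_restrictScalars (hM : IsMaximalClass E M Mc)
    (hEF : Module.finrank F E = 2) (hx : x ∈ Mc 1) (hy : y ∈ Mc 1)
    (hspan : span E {x, y} = Mc 1)
    (hC : ∀ i : ℕ, 2 ≤ i →
      twoStepCentraliser Mc i = span E {x} ∨ twoStepCentraliser Mc i = span E {y})
    (hγ : γ ∉ Set.range (algebraMap F E)) (hδ : δ ∉ Set.range (algebraMap F E)) (hγδ : γ ≠ δ)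
    {k : ℕ} (hk : 3 ≤ k) :
    Lcomp F (x + y) (γ • x + δ • y) k = (Mc k).restrictScalars F := by
  induction k, hk using Nat.le_induction with
  | base =>
    refine Lcomp_succ_eq_restrictScalars hM hEF hx hy hspan hC hγ hδ le_rfl
      (by rw [Lcomp_two]; exact mem_span_singleton_self _) ?_
    rw [lie_add_smul_add_smul]
    exact smul_ne_zero (sub_ne_zero.2 hγδ.symm) (hM.lie_ne_zero hspan)
  | succ k hk ih =>
    obtain ⟨w, hw, hw0⟩ := hM.exists_mem_ne_zero (by omega : 2 ≤ k)
    exact Lcomp_succ_eq_restrictScalars hM hEF hx hy hspan hC hγ hδ (by omega) (ih ▸ hw) hw0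

lemma coveringProperty_add_smul_add_smul (hM : IsMaximalClass E M Mc)
    (hEF : Module.finrank F E = 2) (hx : x ∈ Mc 1) (hy : y ∈ Mc 1)
    (hspan : span E {x, y} = Mc 1)
    (hC : ∀ i : ℕ, 2 ≤ i →
      twoStepCentraliser Mc i = span E {x} ∨ twoStepCentraliser Mc i = span E {y})
    (hγ : γ ∉ Set.range (algebraMap F E)) (hδ : δ ∉ Set.range (algebraMap F E)) :
    CoveringProperty F (x + y) (γ • x + δ • y) := by
  intro i hi u hu hu0
  rcases hi.eq_or_lt with rfl | hi
  · exact span_lie_Lcomp_one_eq_Lcomp_two hu hu0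
  · have huM := hM.Lcomp_le (F := F) (add_mem hx hy)
      (add_mem (smul_mem _ γ hx) (smul_mem _ δ hy)) (by omega) hu
    rw [Lcomp_one, span_lie_span_pair,
      span_lie_eq_restrictScalars_succ hM hEF hspan hγ hδ hi (hC i hi) huM hu0,
      Lcomp_succ_eq_restrictScalars hM hEF hx hy hspan hC hγ hδ hi hu hu0]

lemma finrank_Lcomp_add_smul_add_smul (hM : IsMaximalClass E M Mc)
    (hEF : Module.finrank F E = 2) (hx : x ∈ Mc 1) (hy : y ∈ Mc 1)
    (hxy : LinearIndependent E ![x, y]) (hspan : span E {x, y} = Mc 1)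
    (hC : ∀ i : ℕ, 2 ≤ i →
      twoStepCentraliser Mc i = span E {x} ∨ twoStepCentraliser Mc i = span E {y})
    (hγ : γ ∉ Set.range (algebraMap F E)) (hδ : δ ∉ Set.range (algebraMap F E)) (hγδ : γ ≠ δ)
    {i : ℕ} (hi : 1 ≤ i) (hi2 : i ≠ 2) :
    Module.finrank F (Lcomp F (x + y) (γ • x + δ • y) i) = 2 := by
  rcases hi.eq_or_lt with rfl | hi
  · exact finrank_span_pair ((linearIndependent_add_smul_add_smul hxy hγδ).restrict_scalars' F)
  · rw [Lcomp_eq_restrictScalars hM hEF hx hy hspan hC hγ hδ hγδ (by omega),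
      finrank_restrictScalars_submodule, hEF, hM.finrank_eq_one i (by omega)]

lemma lie_lie_ne_zero_of_twoStepCentraliser_ne (hM : IsMaximalClass E M Mc)
    (hx : x ∈ Mc 1) (hy : y ∈ Mc 1) (hxy : LinearIndependent E ![x, y])
    (hspan : span E {x, y} = Mc 1)
    (hC : ∀ i : ℕ, 2 ≤ i →
      twoStepCentraliser Mc i = span E {x} ∨ twoStepCentraliser Mc i = span E {y})
    {k : ℕ} (hk : 2 ≤ k) (hne : twoStepCentraliser Mc k ≠ twoStepCentraliser Mc (k + 1))
    {z : M} (hz : z ∈ Mc k) (hz0 : z ≠ 0) : ⁅⁅x, y⁆, z⁆ ≠ 0 := by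
  have hnotle {p : M} (hCk : twoStepCentraliser Mc k = span E {p}) :
      p ∉ twoStepCentraliser Mc (k + 1) := fun hp =>
    hne (twoStepCentraliser_eq_of_le hxy hC hk (by omega)
      (hCk ▸ (span_singleton_le_iff_mem _ _).2 hp))
  rcases hC k hk with h | h
  · exact hM.lie_lie_ne_zero hx hspan hk hz hz0 h (hnotle h)
  · rw [← lie_skew x y, neg_lie, neg_ne_zero]
    exact hM.lie_lie_ne_zero hy (by rwa [Set.pair_comm]) hk hz hz0 h (hnotle h)

lemma not_metabelian_add_smul_add_smul (hM : IsMaximalClass E M Mc)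
    (hEF : Module.finrank F E = 2) (hx : x ∈ Mc 1) (hy : y ∈ Mc 1)
    (hxy : LinearIndependent E ![x, y]) (hspan : span E {x, y} = Mc 1)
    (hC : ∀ i : ℕ, 2 ≤ i →
      twoStepCentraliser Mc i = span E {x} ∨ twoStepCentraliser Mc i = span E {y})
    (hCx : ∃ i : ℕ, 2 ≤ i ∧ twoStepCentraliser Mc i = span E {x})
    (hCy : ∃ j : ℕ, 2 ≤ j ∧ twoStepCentraliser Mc j = span E {y})
    (hγ : γ ∉ Set.range (algebraMap F E)) (hδ : δ ∉ Set.range (algebraMap F E)) (hγδ : γ ≠ δ) :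
    ¬ (∀ a b c d : M,
        a ∈ LieSubalgebra.lieSpan F M {x + y, γ • x + δ • y} →
        b ∈ LieSubalgebra.lieSpan F M {x + y, γ • x + δ • y} →
        c ∈ LieSubalgebra.lieSpan F M {x + y, γ • x + δ • y} →
        d ∈ LieSubalgebra.lieSpan F M {x + y, γ • x + δ • y} →
        ⁅⁅a, b⁆, ⁅c, d⁆⁆ = 0) := by
  intro hmet
  obtain ⟨k, hk, hne⟩ := exists_twoStepCentraliser_ne_succ hM hxy hC hCx hCy
  obtain ⟨z, hz, hz0⟩ := hM.exists_mem_ne_zero (by omega : 2 ≤ k)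
  have hzL : z ∈ Lcomp F (x + y) (γ • x + δ • y) k :=
    (Lcomp_eq_restrictScalars hM hEF hx hy hspan hC hγ hδ hγδ hk).ge hz
  have h0 := lie_lie_eq_zero_of_mem_Lcomp hmet (by omega) hzL
  rw [lie_add_smul_add_smul, smul_lie] at h0
  exact smul_ne_zero (sub_ne_zero.2 hγδ.symm)
    (lie_lie_ne_zero_of_twoStepCentraliser_ne hM hx hy hxy hspan hC (by omega) hne hz hz0) h0

end AlternatingCentralisers

/-- if `[E : F] = 2`, `x, y` is an `E`-basis of `M_1` such that every
2-step centraliser is `E·x` or `E·y` and both occur, and `γ, δ ∈ E \ F` with `γ ≠ δ`,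
then the Lie `F`-subalgebra generated by `x + y` and `γx + δy` is thin, non-metabelian,
and all its homogeneous components of degree `≠ 2` have dimension 2 over `F`. -/
theorem stmt_9 (E : Type*) [Field E] (M : Type*) [LieRing M] [LieAlgebra E M]
    (Mc : ℕ → Submodule E M) (hM : IsMaximalClass E M Mc)
    (F : Type*) [Field F] [Algebra F E] [LieAlgebra F M] [IsScalarTower F E M]
    (hEF : Module.finrank F E = 2)
    (x y : M) (hx : x ∈ Mc 1) (hy : y ∈ Mc 1) (hxy : LinearIndependent E ![x, y])
    (hspan : Submodule.span E {x, y} = Mc 1)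
    (hC : ∀ i : ℕ, 2 ≤ i →
      twoStepCentraliser Mc i = Submodule.span E {x} ∨
      twoStepCentraliser Mc i = Submodule.span E {y})
    (hCx : ∃ i : ℕ, 2 ≤ i ∧ twoStepCentraliser Mc i = Submodule.span E {x})
    (hCy : ∃ j : ℕ, 2 ≤ j ∧ twoStepCentraliser Mc j = Submodule.span E {y})
    (γ δ : E) (hγ : γ ∉ Set.range (algebraMap F E)) (hδ : δ ∉ Set.range (algebraMap F E))
    (hγδ : γ ≠ δ) :
    CoveringProperty F (x + y) (γ • x + δ • y) ∧
    ¬ (∀ i : ℕ, 2 ≤ i → Module.finrank F ↥(Lcomp F (x + y) (γ • x + δ • y) i) = 1) ∧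
    ¬ (∀ a b c d : M,
        a ∈ LieSubalgebra.lieSpan F M {x + y, γ • x + δ • y} →
        b ∈ LieSubalgebra.lieSpan F M {x + y, γ • x + δ • y} →
        c ∈ LieSubalgebra.lieSpan F M {x + y, γ • x + δ • y} →
        d ∈ LieSubalgebra.lieSpan F M {x + y, γ • x + δ • y} →
        ⁅⁅a, b⁆, ⁅c, d⁆⁆ = 0) ∧
    (∀ i : ℕ, 1 ≤ i → i ≠ 2 →
      Module.finrank F ↥(Lcomp F (x + y) (γ • x + δ • y) i) = 2) := by
  have hfinrank := fun i hi hi2 =>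
    finrank_Lcomp_add_smul_add_smul hM hEF hx hy hxy hspan hC hγ hδ hγδ (i := i) hi hi2
  refine ⟨coveringProperty_add_smul_add_smul hM hEF hx hy hspan hC hγ hδ, fun h => ?_,
    not_metabelian_add_smul_add_smul hM hEF hx hy hxy hspan hC hCx hCy hγ hδ hγδ, hfinrank⟩
  have h3 := h 3 (by norm_num)
  rw [hfinrank 3 (by norm_num) (by norm_num)] at h3
  exact absurd h3 (by norm_num)
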